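/- arXiv:2301.01572 — 4 statements merged into one kernel-verified Lean document; each statement's English description precedes it below -/
import Mathlib

section
/- Let E be a real Hilbert space, f : E → ℝ a differentiable convex function with gradient ∇f, g : E → ℝ a convex function, and F = f + g. Fix η > 0 and P ∈ E, and let p ∈ E be a minimizer over E of the model u ↦ f(P) + ⟨∇f(P), u − P⟩ + (η/2)‖u − P‖² + g(u). If F(p) ≤ f(P) + ⟨∇f(P), p − P⟩ + (η/2)‖p − P‖² + g(p), then for every A ∈ E: F(A) − F(p) ≥ (η/2)‖p − P‖² + η⟨P − A, p − P⟩. -/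
/-!
Since `p` minimizes the proximal model `M`, which is `η`-strongly convex, `M` grows quadratically
away from `p`: `M p + η/2 ‖A - p‖² ≤ M A`. By the gradient inequality, `F A` dominates the
linearization of `f` at `P` plus `g A`, which is `M A - η/2 ‖A - P‖²`; by hypothesis `F p ≤ M p`.
Chaining these, `F A - F p ≥ η/2 (‖A - p‖² - ‖A - P‖²)`, and the polarization identity turns the
right-hand side into `η/2 ‖p - P‖² + η ⟪P - A, p - P⟫`.
-/

open RealInnerProductSpace Set

lemma le_of_forall_mem_Ioc_le_add_mul {a b c : ℝ} (h : ∀ t ∈ Ioc (0 : ℝ) 1, a ≤ b + t * c) :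
    a ≤ b := by
  have hclosed : IsClosed {t : ℝ | a ≤ b + t * c} := isClosed_le continuous_const (by fun_prop)
  have h0 : (0 : ℝ) ∈ closure (Ioc 0 1) := by simp [closure_Ioc]
  simpa using hclosed.closure_subset_iff.2 h h0

section NormedSpace

variable {E : Type*} [NormedAddCommGroup E] [NormedSpace ℝ E] {s : Set E} {f : E → ℝ}

lemma ConvexOn.add_apply_sub_le_of_hasFDerivAt {f' : E →L[ℝ] ℝ} {x y : E} (hf : ConvexOn ℝ s f)
    (hx : x ∈ s) (hy : y ∈ s) (hf' : HasFDerivAt f f' x) : f x + f' (y - x) ≤ f y := by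
  set φ : ℝ → ℝ := f ∘ AffineMap.lineMap x y
  have hφ : ConvexOn ℝ (Icc 0 1) φ :=
    (hf.comp_affineMap _).subset (fun t ht ↦ hf.1.lineMap_mem hx hy ht) (convex_Icc 0 1)
  have hφ' : HasDerivAt φ (f' (y - x)) 0 :=
    (by simpa using hf' : HasFDerivAt f f' (AffineMap.lineMap x y (0 : ℝ))).comp_hasDerivAt 0
      AffineMap.hasDerivAt_lineMap
  have hslope := hφ.le_slope_of_hasDerivAt (by simp) (by simp) one_pos hφ'
  simp only [slope_def_field, φ, Function.comp_apply, AffineMap.lineMap_apply_zero,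
    AffineMap.lineMap_apply_one, sub_zero, div_one] at hslope
  linarith

lemma StrongConvexOn.add_sq_le_of_isMinOn {m : ℝ} {x y : E} (hf : StrongConvexOn s m f)
    (hmin : IsMinOn f s x) (hx : x ∈ s) (hy : y ∈ s) : f x + m / 2 * ‖y - x‖ ^ 2 ≤ f y := by
  refine le_of_forall_mem_Ioc_le_add_mul (c := m / 2 * ‖y - x‖ ^ 2) fun t ⟨ht0, ht1⟩ ↦ ?_
  have hseg := hf.2 hx hy (sub_nonneg.2 ht1) ht0.le (sub_add_cancel 1 t)
  have hxz : f x ≤ f _ := hmin (hf.1 hx hy (sub_nonneg.2 ht1) ht0.le (sub_add_cancel 1 t))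
  rw [norm_sub_rev, smul_eq_mul, smul_eq_mul] at hseg
  refine le_of_mul_le_mul_left ?_ ht0
  linarith

end NormedSpace

section InnerProductSpace

variable {E : Type*} [NormedAddCommGroup E] [InnerProductSpace ℝ E]

/-- The proximal model `M_{y,η}` of `f + g` at `y`, with `f'` the gradient of `f`. -/
noncomputable def proxModel (f g : E → ℝ) (f' : E → E) (η : ℝ) (y u : E) : ℝ :=
  f y + ⟪f' y, u - y⟫ + η / 2 * ‖u - y‖ ^ 2 + g u

lemma strongConvexOn_proxModel {s : Set E} {f g : E → ℝ} {f' : E → E} {η : ℝ} {y : E}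
    (hg : ConvexOn ℝ s g) : StrongConvexOn s η (proxModel f g f' η y) := by
  rw [strongConvexOn_iff_convex]
  have haffine : ∀ u, proxModel f g f' η y u - η / 2 * ‖u‖ ^ 2 =
      g u + (innerSL ℝ (f' y - η • y) u + (f y - ⟪f' y, y⟫ + η / 2 * ‖y‖ ^ 2)) := by
    intro u
    simp only [proxModel, innerSL_apply_apply, inner_sub_left, inner_sub_right,
      real_inner_smul_left, norm_sub_sq_real, real_inner_comm u y]
    ring
  simp only [haffine]
  exact hg.add (((innerSL ℝ (f' y - η • y)).toLinearMap.convexOn hg.1).add_const _)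

end InnerProductSpace

theorem stmt_0_general {E : Type*} [NormedAddCommGroup E] [InnerProductSpace ℝ E] [CompleteSpace E]
    (f g : E → ℝ) (f' : E → E)
    (hf : ConvexOn ℝ Set.univ f)
    (hdiff : ∀ x, HasGradientAt f (f' x) x)
    (hg : ConvexOn ℝ Set.univ g)
    (η : ℝ) (P p : E)
    (hmin : ∀ u : E,
      f P + ⟪f' P, p - P⟫ + η / 2 * ‖p - P‖ ^ 2 + g p ≤
      f P + ⟪f' P, u - P⟫ + η / 2 * ‖u - P‖ ^ 2 + g u)
    (hmaj : f p + g p ≤ f P + ⟪f' P, p - P⟫ + η / 2 * ‖p - P‖ ^ 2 + g p) :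
    ∀ A : E, (f A + g A) - (f p + g p) ≥
      η / 2 * ‖p - P‖ ^ 2 + η * ⟪P - A, p - P⟫ := by
  intro A
  have hgrowth : proxModel f g f' η P p + η / 2 * ‖A - p‖ ^ 2 ≤ proxModel f g f' η P A :=
    (strongConvexOn_proxModel hg).add_sq_le_of_isMinOn (fun u _ ↦ hmin u)
      (mem_univ p) (mem_univ A)
  have hgrad : f P + ⟪f' P, A - P⟫ ≤ f A :=
    hf.add_apply_sub_le_of_hasFDerivAt (mem_univ P) (mem_univ A) (hdiff P).hasFDerivAt
  have hpolar : ‖A - p‖ ^ 2 = ‖A - P‖ ^ 2 + ‖p - P‖ ^ 2 + 2 * ⟪P - A, p - P⟫ := by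
    rw [show A - p = (A - P) - (p - P) by abel, norm_sub_sq_real,
      show P - A = -(A - P) by abel, inner_neg_left]
    ring
  unfold proxModel at hgrowth
  rw [hpolar] at hgrowth
  linarith

/-- Lemma 1: key descent lemma for the proximal model. -/
theorem stmt_0 {E : Type*} [NormedAddCommGroup E] [InnerProductSpace ℝ E] [CompleteSpace E]
    (f g : E → ℝ) (f' : E → E)
    (hf : ConvexOn ℝ Set.univ f)
    (hdiff : ∀ x, HasGradientAt f (f' x) x)
    (hg : ConvexOn ℝ Set.univ g)
    (η : ℝ) (hη : 0 < η) (P p : E)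
    (hmin : ∀ u : E,
      f P + ⟪f' P, p - P⟫ + η / 2 * ‖p - P‖ ^ 2 + g p ≤
      f P + ⟪f' P, u - P⟫ + η / 2 * ‖u - P‖ ^ 2 + g u)
    (hmaj : f p + g p ≤ f P + ⟪f' P, p - P⟫ + η / 2 * ‖p - P‖ ^ 2 + g p) :
    ∀ A : E, (f A + g A) - (f p + g p) ≥
      η / 2 * ‖p - P‖ ^ 2 + η * ⟪P - A, p - P⟫ :=
  stmt_0_general f g f' hf hdiff hg η P p hmin hmaj
end

section
/- Let E be a real Hilbert space, g : E → ℝ convex, and f : E → ℝ differentiable with gradient ∇f, σ-strongly convex and L-smooth; set F = f + g. Fix α > 0, y ∈ E, and let p ∈ E be a minimizer over E of u ↦ f(y) + ⟨∇f(y), u − y⟩ + g(u) + (α/2)‖u − y‖². If f(p) ≤ f(y) + ⟨∇f(y), p − y⟩ + (α/2)‖p − y‖², then for every x ∈ E: F(x) − F(p) ≥ (α/2)‖x − p‖² − (α/2)‖x − y‖² + f(x) − f(y) − ⟨∇f(y), x − y⟩. -/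
/-!
The objective `u ↦ f y + ⟪∇f y, u - y⟫ + g u + α/2 ‖u - y‖²` minimized by `p` is `α`-strongly
convex, so it exceeds its minimum at `x` by at least `α/2 ‖x - p‖²`. Replacing the linearization
of `f` at `p` by `f p` via the hypothesis on `f p` gives the inequality.
-/

open RealInnerProductSpace Set Filter Topology

lemma le_of_forall_one_sub_mul_le {a b : ℝ} (h : ∀ t ∈ Ioo (0 : ℝ) 1, (1 - t) * a ≤ b) :
    a ≤ b := by
  have hcont : Continuous fun t : ℝ => (1 - t) * a := by fun_prop
  have hlim : Tendsto (fun t : ℝ => (1 - t) * a) (𝓝[>] 0) (𝓝 a) :=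
    (hcont.tendsto' 0 a (by simp)).mono_left nhdsWithin_le_nhds
  exact le_of_tendsto hlim (mem_of_superset (Ioo_mem_nhdsGT one_pos) h)

/- Moving from the minimizer `p` a fraction `t` towards `x` cannot decrease `f`, while uniform
convexity gains `t (1 - t) φ ‖x - p‖`; divide by `t` and let `t → 0`. -/
lemma UniformConvexOn.le_sub_of_isMinOn {E : Type*} [NormedAddCommGroup E] [NormedSpace ℝ E]
    {s : Set E} {φ : ℝ → ℝ} {f : E → ℝ} {p x : E} (hf : UniformConvexOn s φ f)
    (hmin : IsMinOn f s p) (hp : p ∈ s) (hx : x ∈ s) : φ ‖x - p‖ ≤ f x - f p := by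
  refine le_of_forall_one_sub_mul_le fun t ⟨ht₀, ht₁⟩ => ?_
  have hsum : t + (1 - t) = 1 := add_sub_cancel t 1
  have hconv := hf.2 hx hp ht₀.le (sub_nonneg.2 ht₁.le) hsum
  have hp_le := isMinOn_iff.1 hmin _ (hf.1 hx hp ht₀.le (sub_nonneg.2 ht₁.le) hsum)
  rw [smul_eq_mul, smul_eq_mul] at hconv
  have : t * ((1 - t) * φ ‖x - p‖) ≤ t * (f x - f p) := by linear_combination hconv + hp_le
  exact le_of_mul_le_mul_left this ht₀

lemma ConvexOn.strongConvexOn_add_inner_add_sq_norm_sub {E : Type*} [NormedAddCommGroup E]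
    [InnerProductSpace ℝ E] {s : Set E} {g : E → ℝ} (hg : ConvexOn ℝ s g) (c m : ℝ) (v y : E) :
    StrongConvexOn s m (fun u => c + ⟪v, u - y⟫ + g u + m / 2 * ‖u - y‖ ^ 2) := by
  rw [strongConvexOn_iff_convex]
  refine (hg.add (((innerₛₗ ℝ (v - m • y)).convexOn hg.1).add_const
    (c - ⟪v, y⟫ + m / 2 * ‖y‖ ^ 2))).congr fun u _ => ?_
  simp only [Pi.add_apply, innerₛₗ_apply_apply, norm_sub_sq_real, inner_sub_left, inner_sub_right,
    real_inner_smul_left, real_inner_comm u y]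
  ring

theorem stmt_2_general {E : Type*} [NormedAddCommGroup E] [InnerProductSpace ℝ E]
    (f g : E → ℝ) (f' : E → E)
    (hg : ConvexOn ℝ Set.univ g)
    (α : ℝ) (y p : E)
    (hmin : ∀ u : E,
      f y + ⟪f' y, p - y⟫ + g p + α / 2 * ‖p - y‖ ^ 2 ≤
      f y + ⟪f' y, u - y⟫ + g u + α / 2 * ‖u - y‖ ^ 2)
    (hineq : f p ≤ f y + ⟪f' y, p - y⟫ + α / 2 * ‖p - y‖ ^ 2) :
    ∀ x : E, (f x + g x) - (f p + g p) ≥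
      α / 2 * ‖x - p‖ ^ 2 - α / 2 * ‖x - y‖ ^ 2
        + f x - f y - ⟪f' y, x - y⟫ := by
  intro x
  have hgrowth : α / 2 * ‖x - p‖ ^ 2 ≤
      (f y + ⟪f' y, x - y⟫ + g x + α / 2 * ‖x - y‖ ^ 2) -
        (f y + ⟪f' y, p - y⟫ + g p + α / 2 * ‖p - y‖ ^ 2) :=
    UniformConvexOn.le_sub_of_isMinOn (hg.strongConvexOn_add_inner_add_sq_norm_sub _ α _ y)
      (isMinOn_univ_iff.2 hmin) (mem_univ p) (mem_univ x)
  linarith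

/-- Lemma 4.2: fundamental proximal inequality under strong convexity and smoothness. -/
theorem stmt_2 {E : Type*} [NormedAddCommGroup E] [InnerProductSpace ℝ E] [CompleteSpace E]
    (f g : E → ℝ) (f' : E → E) (σ L : ℝ)
    (hg : ConvexOn ℝ Set.univ g)
    (hdiff : ∀ x, HasGradientAt f (f' x) x)
    (hsc : ConvexOn ℝ Set.univ (fun x => f x - σ / 2 * ‖x‖ ^ 2))
    (hsm : ConvexOn ℝ Set.univ (fun x => L / 2 * ‖x‖ ^ 2 - f x))
    (α : ℝ) (hα : 0 < α) (y p : E)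
    (hmin : ∀ u : E,
      f y + ⟪f' y, p - y⟫ + g p + α / 2 * ‖p - y‖ ^ 2 ≤
      f y + ⟪f' y, u - y⟫ + g u + α / 2 * ‖u - y‖ ^ 2)
    (hineq : f p ≤ f y + ⟪f' y, p - y⟫ + α / 2 * ‖p - y‖ ^ 2) :
    ∀ x : E, (f x + g x) - (f p + g p) ≥
      α / 2 * ‖x - p‖ ^ 2 - α / 2 * ‖x - y‖ ^ 2
        + f x - f y - ⟪f' y, x - y⟫ :=
  stmt_2_general f g f' hg α y p hmin hineq
end

section
/- Let E be a real inner product space and let σ, L, t be real numbers with σ > 0, t ≥ 1, and σ·t < L. Then for any vectors x, x*, A ∈ E: (L − σ)/2 · ‖t·A − (x* + (t−1)·x)‖² − σ(t−1)/2 · ‖x − x*‖² ≤ (L − σt)/2 · ‖x − x* + ((L − σ)/(L − σt))·t·(A − x)‖². -/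
/-! With `u = x - x*` and `v = t • (A - x)`, the left-hand side reads `b ‖u + v‖² - (b - a) ‖u‖²`
with `b = (L - σ)/2` and `a = (L - σ t)/2`. Expanding both sides, the constant and cross terms agree and
the right-hand side exceeds the left by `b (b/a - 1) ‖v‖²`, which is nonnegative since `0 < a ≤ b`. -/

theorem norm_add_sq_sub_le_mul_norm_add_div_smul_sq {E : Type*} [NormedAddCommGroup E]
    [InnerProductSpace ℝ E] {a b : ℝ} (ha : 0 < a) (hab : a ≤ b) (u v : E) :
    b * ‖u + v‖ ^ 2 - (b - a) * ‖u‖ ^ 2 ≤ a * ‖u + (b / a) • v‖ ^ 2 := by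
  have hexpand : a * ‖u + (b / a) • v‖ ^ 2 =
      a * ‖u‖ ^ 2 + 2 * b * inner ℝ u v + b * (b / a) * ‖v‖ ^ 2 := by
    rw [norm_add_sq_real, real_inner_smul_right, norm_smul, mul_pow, Real.norm_eq_abs, sq_abs]
    field_simp
  have hratio : 1 ≤ b / a := (one_le_div ha).mpr hab
  rw [hexpand, norm_add_sq_real]
  nlinarith [mul_le_mul_of_nonneg_left hratio (ha.le.trans hab), sq_nonneg ‖v‖]

/-- Eq. (4.19): the key norm inequality used in the linear convergence proof. -/
theorem stmt_7 {E : Type*} [NormedAddCommGroup E] [InnerProductSpace ℝ E]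
    (σ L t : ℝ) (hσ : 0 < σ) (ht : 1 ≤ t) (hLt : σ * t < L)
    (x xstar A : E) :
    (L - σ) / 2 * ‖t • A - (xstar + (t - 1) • x)‖ ^ 2
        - σ * (t - 1) / 2 * ‖x - xstar‖ ^ 2 ≤
      (L - σ * t) / 2 * ‖x - xstar + ((L - σ) / (L - σ * t) * t) • (A - x)‖ ^ 2 := by
  have hineq := norm_add_sq_sub_le_mul_norm_add_div_smul_sq (a := (L - σ * t) / 2) (b := (L - σ) / 2)
    (by linarith) (by nlinarith) (x - xstar) (t • (A - x))
  have hsplit : t • A - (xstar + (t - 1) • x) = x - xstar + t • (A - x) := by module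
  have hratio : (L - σ) / 2 / ((L - σ * t) / 2) = (L - σ) / (L - σ * t) := by
    rw [div_div_div_cancel_right₀ two_ne_zero]
  rw [hratio, smul_smul] at hineq
  rw [hsplit]
  convert hineq using 3
  ring
end

section
/- Let E be a real Hilbert space, g : E → ℝ convex, and f : E → ℝ differentiable with gradient ∇f, σ-strongly convex and L-smooth with 0 < σ < L; set F = f + g, t = √(L/σ). Let P* be a minimizer of F over E and define V(x) = F(x) − F(P*). Fix P^{k−1}, P^k ∈ E, let A = P^k + ((t−1)/(t+1))·(P^k − P^{k−1}), and let P^{k+1} be a minimizer over E of u ↦ f(A) + ⟨∇f(A), u − A⟩ + (L/2)‖u − A‖² + g(u). Then: V(P^{k+1}) + (σ/2)‖t·P^{k+1} − (P* + (t−1)·P^k)‖² ≤ (1 − 1/t)·(V(P^k) + (σ/2)‖t·P^k − (P* + (t−1)·P^{k−1})‖²). -/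
open RealInnerProductSpace Set Filter Topology

/-! The proximal step minimizes an `L`-strongly convex model, so at any `u` the model exceeds its
value at `P^{k+1}` by at least `L/2 ‖u - P^{k+1}‖²`; bounding the model by `L`-smoothness above
and `σ`-strong convexity below gives
`F(P^{k+1}) + L/2 ‖u - P^{k+1}‖² ≤ F(u) + (L - σ)/2 ‖u - A‖²`.
Take `u = P*/t + (1 - 1/t) P^k`. Strong convexity of `F` along `[P*, P^k]` bounds `F(u)`, and
since `L = σ t²` the extrapolation coefficient `(t - 1)/(t + 1)` makes `(L - σ)/2 ‖u - A‖²` at most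
the strong-convexity gain plus `1 - 1/t` times the old distance term; the slack is
`σ/2 · (t - 1)³/(t (t + 1)) · ‖P^{k-1} - P^k‖²`. -/

theorem ConvexOn.add_fderiv_sub_le {E : Type*} [NormedAddCommGroup E] [NormedSpace ℝ E]
    {φ : E → ℝ} {φ' : StrongDual ℝ E} {x : E} (hφ : ConvexOn ℝ univ φ)
    (hd : HasFDerivAt φ φ' x) (y : E) : φ x + φ' (y - x) ≤ φ y := by
  have hline : ConvexOn ℝ univ (φ ∘ AffineMap.lineMap (k := ℝ) x y) := hφ.comp_affineMap _
  have hderiv : HasDerivAt (φ ∘ AffineMap.lineMap (k := ℝ) x y) (φ' (y - x)) 0 := by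
    have hl : HasDerivAt (AffineMap.lineMap x y) (y - x) (0 : ℝ) := AffineMap.hasDerivAt_lineMap
    exact (by simpa using hd : HasFDerivAt φ φ' (AffineMap.lineMap x y (0 : ℝ))).comp_hasDerivAt 0 hl
  have := hline.le_slope_of_hasDerivAt (mem_univ 0) (mem_univ 1) zero_lt_one hderiv
  simp only [slope_def_field, Function.comp_apply, AffineMap.lineMap_apply_one,
    AffineMap.lineMap_apply_zero, sub_zero, div_one] at this
  linarith

section InnerProductSpace

variable {E : Type*} [NormedAddCommGroup E] [InnerProductSpace ℝ E]

theorem StrongConvexOn.add_convexOn {s : Set E} {m : ℝ} {φ ψ : E → ℝ}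
    (hφ : StrongConvexOn s m φ) (hψ : ConvexOn ℝ s ψ) : StrongConvexOn s m (φ + ψ) := by
  have h := hφ.add hψ.uniformConvexOn_zero
  rwa [add_zero] at h

theorem StrongConvexOn.add_inner_add_le [CompleteSpace E] {φ : E → ℝ} {φ' x : E} {m : ℝ}
    (hφ : StrongConvexOn univ m φ) (hd : HasGradientAt φ φ' x) (y : E) :
    φ x + ⟪φ', y - x⟫ + m / 2 * ‖y - x‖ ^ 2 ≤ φ y := by
  have hd' := hd.hasFDerivAt.sub ((hasStrictFDerivAt_norm_sq x).hasFDerivAt.const_mul (m / 2))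
  have := (strongConvexOn_iff_convex.1 hφ).add_fderiv_sub_le hd' y
  have hsplit : ‖y‖ ^ 2 = ‖x‖ ^ 2 + 2 * ⟪x, y - x⟫ + ‖y - x‖ ^ 2 := by
    rw [← norm_add_sq_real, add_sub_cancel]
  simp only [sub_apply, InnerProductSpace.toDual_apply_apply, smul_apply, innerSL_apply_apply,
    nsmul_eq_mul, Nat.cast_ofNat, smul_eq_mul] at this
  linear_combination this - m / 2 * hsplit

theorem StrongConvexOn.add_sq_le_of_forall_le {φ : E → ℝ} {x : E} {m : ℝ}
    (hφ : StrongConvexOn univ m φ) (hmin : ∀ u, φ x ≤ φ u) (y : E) :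
    φ x + m / 2 * ‖y - x‖ ^ 2 ≤ φ y := by
  have hbound : ∀ s ∈ Ioc (0 : ℝ) 1, φ x + (1 - s) * (m / 2 * ‖y - x‖ ^ 2) ≤ φ y := by
    rintro s ⟨hs0, hs1⟩
    have hconv := hφ.2 (mem_univ x) (mem_univ y) (sub_nonneg.2 hs1) hs0.le (by ring)
    have := (hmin _).trans hconv
    simp only [smul_eq_mul] at this
    rw [norm_sub_rev] at this
    refine le_of_mul_le_mul_left ?_ hs0
    linarith
  have hlim : Tendsto (fun s : ℝ => φ x + (1 - s) * (m / 2 * ‖y - x‖ ^ 2)) (𝓝[>] 0)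
      (𝓝 (φ x + (1 - 0) * (m / 2 * ‖y - x‖ ^ 2))) :=
    (Continuous.tendsto (by fun_prop) 0).mono_left nhdsWithin_le_nhds
  refine le_of_tendsto (by simpa using hlim) ?_
  filter_upwards [Ioc_mem_nhdsGT (zero_lt_one' ℝ)] with s hs using hbound s hs

noncomputable def quadModel (f : E → ℝ) (d : E) (L : ℝ) (A u : E) : ℝ :=
  f A + ⟪d, u - A⟫ + L / 2 * ‖u - A‖ ^ 2

theorem strongConvexOn_quadModel (f : E → ℝ) (d : E) (L : ℝ) (A : E) :
    StrongConvexOn univ L (quadModel f d L A) := by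
  refine strongConvexOn_iff_convex.2 ?_
  have haffine : (fun u => quadModel f d L A u - L / 2 * ‖u‖ ^ 2)
      = fun u => innerₗ E (d - L • A) u + (f A - ⟪d, A⟫ + L / 2 * ‖A‖ ^ 2) := by
    funext u
    simp only [quadModel, innerₗ_apply_apply, norm_sub_sq_real, inner_sub_left, inner_sub_right,
      real_inner_smul_left, real_inner_comm A u]
    ring
  rw [haffine]
  exact ((innerₗ E (d - L • A)).convexOn convex_univ).add_const _

theorem le_quadModel_of_convexOn [CompleteSpace E] {f : E → ℝ} {f' x : E} {L : ℝ}
    (hsm : ConvexOn ℝ univ (fun x => L / 2 * ‖x‖ ^ 2 - f x)) (hd : HasGradientAt f f' x)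
    (y : E) : f y ≤ quadModel f f' L x y := by
  have hneg : StrongConvexOn univ (-L) (-f) :=
    strongConvexOn_iff_convex.2 (by convert hsm using 2; simp; ring)
  have hd' : HasGradientAt (-f) (-f') x := by
    rw [hasGradientAt_iff_hasFDerivAt, map_neg]
    exact hd.hasFDerivAt.neg
  have := hneg.add_inner_add_le hd' y
  simp only [quadModel, Pi.neg_apply, inner_neg_left] at this ⊢
  linarith

theorem proxGrad_step_le [CompleteSpace E] {f g : E → ℝ} {f' A xp : E} {σ L : ℝ}
    (hsc : StrongConvexOn univ σ f) (hsm : ConvexOn ℝ univ (fun x => L / 2 * ‖x‖ ^ 2 - f x))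
    (hd : HasGradientAt f f' A) (hg : ConvexOn ℝ univ g)
    (hmin : ∀ u, quadModel f f' L A xp + g xp ≤ quadModel f f' L A u + g u) (u : E) :
    f xp + g xp + L / 2 * ‖u - xp‖ ^ 2 ≤ f u + g u + (L - σ) / 2 * ‖u - A‖ ^ 2 := by
  have hstep := ((strongConvexOn_quadModel f f' L A).add_convexOn hg).add_sq_le_of_forall_le hmin u
  have hupper := le_quadModel_of_convexOn hsm hd xp
  have hlower := hsc.add_inner_add_le hd u
  simp only [quadModel, Pi.add_apply] at hstep hupper
  linarith

theorem norm_sq_smul_add_smul (α β : ℝ) (a b : E) :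
    ‖α • a + β • b‖ ^ 2 = α ^ 2 * ‖a‖ ^ 2 + 2 * (α * β) * ⟪a, b⟫ + β ^ 2 * ‖b‖ ^ 2 := by
  rw [norm_add_sq_real, norm_smul, norm_smul, real_inner_smul_left, real_inner_smul_right,
    mul_pow, mul_pow, Real.norm_eq_abs, Real.norm_eq_abs, sq_abs, sq_abs]
  ring

theorem norm_smul_sub_add_smul {t : ℝ} (ht : 0 < t) (p x y : E) :
    ‖t • y - (p + (t - 1) • x)‖ = t * ‖y - (t⁻¹ • p + (1 - t⁻¹) • x)‖ := by
  rw [← norm_smul_of_nonneg ht.le]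
  congr 1
  simp only [smul_sub, smul_add, smul_smul, mul_sub, mul_one, mul_inv_cancel₀ ht.ne', one_smul]

theorem extrapolation_sq_le {t : ℝ} (ht : 1 ≤ t) (p x z : E) :
    (t ^ 2 - 1) * ‖t⁻¹ • p + (1 - t⁻¹) • x - (x + ((t - 1) / (t + 1)) • (x - z))‖ ^ 2 ≤
      t⁻¹ * (1 - t⁻¹) * ‖p - x‖ ^ 2 + (1 - t⁻¹) * ‖t • x - (p + (t - 1) • z)‖ ^ 2 := by
  have ht0 : 0 < t := by linarith
  have hu : t⁻¹ • p + (1 - t⁻¹) • x - (x + ((t - 1) / (t + 1)) • (x - z))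
      = t⁻¹ • (p - x) + ((t - 1) / (t + 1)) • (z - x) := by module
  have hw : t • x - (p + (t - 1) • z) = (-1 : ℝ) • (p - x) + (-(t - 1)) • (z - x) := by module
  have hgap : t⁻¹ * (1 - t⁻¹) * ‖p - x‖ ^ 2 + (1 - t⁻¹) * ((-1) ^ 2 * ‖p - x‖ ^ 2
      + 2 * (-1 * -(t - 1)) * ⟪p - x, z - x⟫ + (-(t - 1)) ^ 2 * ‖z - x‖ ^ 2)
      - (t ^ 2 - 1) * (t⁻¹ ^ 2 * ‖p - x‖ ^ 2 + 2 * (t⁻¹ * ((t - 1) / (t + 1))) * ⟪p - x, z - x⟫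
      + ((t - 1) / (t + 1)) ^ 2 * ‖z - x‖ ^ 2)
      = (t - 1) ^ 3 / (t * (t + 1)) * ‖z - x‖ ^ 2 := by
    field_simp
    ring
  have hnonneg : 0 ≤ (t - 1) ^ 3 / (t * (t + 1)) * ‖z - x‖ ^ 2 := by
    have : 0 ≤ t - 1 := by linarith
    positivity
  rw [hu, hw, norm_sq_smul_add_smul, norm_sq_smul_add_smul]
  linarith

end InnerProductSpace

theorem stmt_9_general {E : Type*} [NormedAddCommGroup E] [InnerProductSpace ℝ E] [CompleteSpace E]
    (f g : E → ℝ) (f' : E → E) (σ L : ℝ)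
    (hσ : 0 < σ) (hσL : σ < L)
    (hg : ConvexOn ℝ Set.univ g)
    (hdiff : ∀ x, HasGradientAt f (f' x) x)
    (hsc : ConvexOn ℝ Set.univ (fun x => f x - σ / 2 * ‖x‖ ^ 2))
    (hsm : ConvexOn ℝ Set.univ (fun x => L / 2 * ‖x‖ ^ 2 - f x))
    (Pstar : E)
    (Pkm Pk Pk1 : E) :
    let t := Real.sqrt (L / σ)
    let A := Pk + ((t - 1) / (t + 1)) • (Pk - Pkm)
    let V := fun x : E => (f x + g x) - (f Pstar + g Pstar)
    (∀ u : E,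
      f A + ⟪f' A, Pk1 - A⟫ + L / 2 * ‖Pk1 - A‖ ^ 2 + g Pk1 ≤
      f A + ⟪f' A, u - A⟫ + L / 2 * ‖u - A‖ ^ 2 + g u) →
    V Pk1 + σ / 2 * ‖t • Pk1 - (Pstar + (t - 1) • Pk)‖ ^ 2 ≤
      (1 - 1 / t) * (V Pk + σ / 2 * ‖t • Pk - (Pstar + (t - 1) • Pkm)‖ ^ 2) := by
  intro t A V hmin
  have hL : L = σ * t ^ 2 := by
    rw [Real.sq_sqrt (div_pos (hσ.trans hσL) hσ).le]
    field_simp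
  have ht : 1 ≤ t := Real.one_le_sqrt.2 ((one_le_div hσ).2 hσL.le)
  have ht0 : 0 < t := by linarith
  have hsc' : StrongConvexOn univ σ f := strongConvexOn_iff_convex.2 hsc
  set u := t⁻¹ • Pstar + (1 - t⁻¹) • Pk
  have hstep := proxGrad_step_le hsc' hsm (hdiff A) hg hmin u
  have hconv := (hsc'.add_convexOn hg).2 (mem_univ Pstar) (mem_univ Pk) (inv_nonneg.2 ht0.le)
    (sub_nonneg.2 (inv_le_one_of_one_le₀ ht)) (add_sub_cancel _ _)
  have hextra := mul_le_mul_of_nonneg_left (extrapolation_sq_le ht Pstar Pk Pkm)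
    (half_pos hσ).le
  rw [norm_smul_sub_add_smul ht0, mul_pow, norm_sub_rev]
  simp only [V, one_div, Pi.add_apply, smul_eq_mul] at hconv ⊢
  rw [hL] at hstep
  linear_combination hstep + hconv + hextra

/-- Eq. (4.22): the one-step contraction inequality underlying the linear
convergence of the accelerated proximal-gradient algorithm. -/
theorem stmt_9 {E : Type*} [NormedAddCommGroup E] [InnerProductSpace ℝ E] [CompleteSpace E]
    (f g : E → ℝ) (f' : E → E) (σ L : ℝ)
    (hσ : 0 < σ) (hσL : σ < L)
    (hg : ConvexOn ℝ Set.univ g)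
    (hdiff : ∀ x, HasGradientAt f (f' x) x)
    (hsc : ConvexOn ℝ Set.univ (fun x => f x - σ / 2 * ‖x‖ ^ 2))
    (hsm : ConvexOn ℝ Set.univ (fun x => L / 2 * ‖x‖ ^ 2 - f x))
    (Pstar : E) (hPstar : ∀ x : E, f Pstar + g Pstar ≤ f x + g x)
    (Pkm Pk Pk1 : E) :
    let t := Real.sqrt (L / σ)
    let A := Pk + ((t - 1) / (t + 1)) • (Pk - Pkm)
    let V := fun x : E => (f x + g x) - (f Pstar + g Pstar)
    (∀ u : E,
      f A + ⟪f' A, Pk1 - A⟫ + L / 2 * ‖Pk1 - A‖ ^ 2 + g Pk1 ≤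
      f A + ⟪f' A, u - A⟫ + L / 2 * ‖u - A‖ ^ 2 + g u) →
    V Pk1 + σ / 2 * ‖t • Pk1 - (Pstar + (t - 1) • Pk)‖ ^ 2 ≤
      (1 - 1 / t) * (V Pk + σ / 2 * ‖t • Pk - (Pstar + (t - 1) • Pkm)‖ ^ 2) :=
  stmt_9_general f g f' σ L hσ hσL hg hdiff hsc hsm Pstar Pkm Pk Pk1
end
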